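/- For every n ≥ 1 and every x ∈ [0, exp(-√n)], the function R_n(x) = x² r_n(x) built from Newman polynomials satisfies x² |r_n'(x)| ≤ 4n (1 - n^{-1/2})^{-2} e^{-√n} (for n ≥ 2 so that 1 - n^{-1/2} > 0). -/

import Mathlib

noncomputable def NewmanP (n : ℕ) (x : ℝ) : ℝ :=
  ∏ i ∈ Finset.range n, (x + (Real.exp (-(1 / Real.sqrt n))) ^ i)

noncomputable def newmanRat (n : ℕ) (x : ℝ) : ℝ :=
  (NewmanP n x - NewmanP n (-x)) / (NewmanP n x + NewmanP n (-x))

/-!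
Write `P(y) = ∏ᵢ (y + aᵢ)` with `aᵢ = ξ^i`, and `Aⱼ`, `Bⱼ` for the products omitting factor `j`
at `x` and at `-x`. Differentiating the quotient, the cross terms `P'(x) P(-x) + P'(-x) P(x)` pair
up factor by factor into `∑ⱼ 2 aⱼ Aⱼ Bⱼ`, so `r' = 4 ∑ⱼ aⱼ Aⱼ Bⱼ / (P(x) + P(-x))²`. For
`0 ≤ x ≤ aᵢ` we have `0 ≤ Bⱼ ≤ Aⱼ` and `x aⱼ ≤ (x + aⱼ)²`, so each term of `x² r'` is at most
`4 x P(x)² / (P(x) + P(-x))² ≤ 4 x`. Hence `x² |r'(x)| ≤ 4 n x`, and `x ≤ e^{-√n} = ξ^n ≤ ξ^i`.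
-/

open Finset

theorem hasDerivAt_oddPart_div_evenPart {f : ℝ → ℝ} {d e x : ℝ} (hd : HasDerivAt f d x)
    (he : HasDerivAt f e (-x)) (h : f x + f (-x) ≠ 0) :
    HasDerivAt (fun y => (f y - f (-y)) / (f y + f (-y)))
      (2 * (d * f (-x) + e * f x) / (f x + f (-x)) ^ 2) x := by
  have he_neg : HasDerivAt (fun y => f (-y)) (e * -1) x := he.comp x (hasDerivAt_neg x)
  exact ((hd.fun_sub he_neg).fun_div (hd.fun_add he_neg) h).congr_deriv (by ring)

section ProdAdd

variable {ι : Type*} [DecidableEq ι] {s : Finset ι} {a : ι → ℝ}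

theorem hasDerivAt_prod_add (s : Finset ι) (a : ι → ℝ) (x : ℝ) :
    HasDerivAt (fun y => ∏ i ∈ s, (y + a i)) (∑ j ∈ s, ∏ i ∈ s.erase j, (x + a i)) x := by
  simpa using HasDerivAt.fun_finsetProd (u := s) (f' := fun _ => (1 : ℝ))
    fun i _ => (hasDerivAt_id x).add_const (a i)

theorem sum_prod_erase_mul_prod_add_sum_prod_erase_mul_prod (s : Finset ι) (a : ι → ℝ) (x : ℝ) :
    (∑ j ∈ s, ∏ i ∈ s.erase j, (x + a i)) * ∏ i ∈ s, (-x + a i) +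
        (∑ j ∈ s, ∏ i ∈ s.erase j, (-x + a i)) * ∏ i ∈ s, (x + a i) =
      ∑ j ∈ s, 2 * (a j * ((∏ i ∈ s.erase j, (x + a i)) * ∏ i ∈ s.erase j, (-x + a i))) := by
  rw [sum_mul, sum_mul, ← sum_add_distrib]
  refine sum_congr rfl fun j hj => ?_
  rw [← mul_prod_erase s (fun i => x + a i) hj, ← mul_prod_erase s (fun i => -x + a i) hj]
  ring

theorem sq_mul_mul_prod_erase_le {x : ℝ} (hx₀ : 0 ≤ x) (hxa : ∀ i ∈ s, x ≤ a i) {j : ι}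
    (hj : j ∈ s) :
    x ^ 2 * (a j * ((∏ i ∈ s.erase j, (x + a i)) * ∏ i ∈ s.erase j, (-x + a i))) ≤
      x * (∏ i ∈ s, (x + a i)) ^ 2 := by
  set A := ∏ i ∈ s.erase j, (x + a i)
  set B := ∏ i ∈ s.erase j, (-x + a i)
  have hB₀ : 0 ≤ B := prod_nonneg fun i hi => by linarith [hxa i (mem_of_mem_erase hi)]
  have hBA : B ≤ A := prod_le_prod (fun i hi => by linarith [hxa i (mem_of_mem_erase hi)])
    fun i _ => by linarith
  have haj : x * a j ≤ (x + a j) ^ 2 := by nlinarith [hxa j hj]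
  rw [← mul_prod_erase s (fun i => x + a i) hj]
  calc x ^ 2 * (a j * (A * B)) = x * ((x * a j) * (A * B)) := by ring
    _ ≤ x * ((x + a j) ^ 2 * (A * A)) := by
      gcongr
      · exact mul_nonneg (hB₀.trans hBA) hB₀
      · exact hB₀.trans hBA
    _ = x * ((x + a j) * A) ^ 2 := by ring

theorem sq_mul_abs_deriv_prod_add_ratio_le (ha : ∀ i ∈ s, 0 < a i) {x : ℝ} (hx₀ : 0 ≤ x)
    (hxa : ∀ i ∈ s, x ≤ a i) :
    x ^ 2 * |deriv (fun y => (∏ i ∈ s, (y + a i) - ∏ i ∈ s, (-y + a i)) /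
        (∏ i ∈ s, (y + a i) + ∏ i ∈ s, (-y + a i))) x| ≤ 4 * #s * x := by
  set P := ∏ i ∈ s, (x + a i)
  set Q := ∏ i ∈ s, (-x + a i)
  have hP : 0 < P := prod_pos fun i hi => by linarith [ha i hi]
  have hQ : 0 ≤ Q := prod_nonneg fun i hi => by linarith [hxa i hi]
  set N := ∑ j ∈ s, a j * ((∏ i ∈ s.erase j, (x + a i)) * ∏ i ∈ s.erase j, (-x + a i))
  have hN : 0 ≤ N := sum_nonneg fun j hj => mul_nonneg (ha j hj).le <|
    mul_nonneg (prod_nonneg fun i hi => by linarith [ha i (mem_of_mem_erase hi)])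
      (prod_nonneg fun i hi => by linarith [hxa i (mem_of_mem_erase hi)])
  have hderiv := hasDerivAt_oddPart_div_evenPart (hasDerivAt_prod_add s a x)
    (hasDerivAt_prod_add s a (-x)) (by positivity)
  rw [hderiv.deriv, sum_prod_erase_mul_prod_add_sum_prod_erase_mul_prod, ← mul_sum,
    abs_of_nonneg (by positivity)]
  have hxN : x ^ 2 * N ≤ #s * x * (P + Q) ^ 2 := calc
    x ^ 2 * N ≤ #s • (x * P ^ 2) := by
      rw [mul_sum]; exact sum_le_card_nsmul _ _ _ fun j hj => sq_mul_mul_prod_erase_le hx₀ hxa hj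
    _ ≤ #s * x * (P + Q) ^ 2 := by
      rw [nsmul_eq_mul, mul_assoc]; gcongr; linarith
  rw [mul_div_assoc', div_le_iff₀ (by positivity)]
  linarith

end ProdAdd

theorem exp_neg_one_div_sqrt_pow (n : ℕ) :
    Real.exp (-(1 / Real.sqrt n)) ^ n = Real.exp (-Real.sqrt n) := by
  rw [← Real.exp_nat_mul, mul_neg, mul_one_div, Real.div_sqrt]

theorem one_le_inv_one_sub_one_div_sqrt_sq {n : ℕ} (hn : 2 ≤ n) :
    1 ≤ ((1 - 1 / Real.sqrt n)⁻¹) ^ 2 := by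
  have hs : 1 < Real.sqrt n := Real.lt_sqrt_of_sq_lt (by exact_mod_cast (by omega : 1 ^ 2 < n))
  have hpos : 0 < 1 - 1 / Real.sqrt n := by
    rw [sub_pos, div_lt_one (by positivity)]; exact hs
  refine one_le_pow₀ ((one_le_inv₀ hpos).2 ?_)
  linarith [show 0 < 1 / Real.sqrt n by positivity]

theorem newman_rat_deriv_small_x_bound (n : ℕ) (hn : 2 ≤ n) (x : ℝ)
    (hx : x ∈ Set.Icc (0 : ℝ) (Real.exp (-Real.sqrt n))) :
    x ^ 2 * |deriv (newmanRat n) x| ≤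
      4 * n * ((1 - 1 / Real.sqrt n)⁻¹) ^ 2 * Real.exp (-Real.sqrt n) := by
  set ξ := Real.exp (-(1 / Real.sqrt n))
  have hξ : ξ ≤ 1 := Real.exp_le_one_iff.2 (by simp only [neg_nonpos]; positivity)
  have hxξ : ∀ i ∈ range n, x ≤ ξ ^ i := fun i hi =>
    calc x ≤ ξ ^ n := hx.2.trans_eq (exp_neg_one_div_sqrt_pow n).symm
      _ ≤ ξ ^ i := pow_le_pow_of_le_one (by positivity) hξ (mem_range.1 hi).le
  have hbound := sq_mul_abs_deriv_prod_add_ratio_le (fun i _ => by positivity) hx.1 hxξ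
  rw [card_range] at hbound
  calc x ^ 2 * |deriv (newmanRat n) x| ≤ 4 * n * x := hbound
    _ ≤ 4 * n * Real.exp (-Real.sqrt n) := by gcongr; exact hx.2
    _ ≤ _ := mul_le_mul_of_nonneg_right
      (le_mul_of_one_le_right (by positivity) (one_le_inv_one_sub_one_div_sqrt_sq hn))
      (Real.exp_pos _).le
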